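/- If s^{k+1} a ≤_A a for some k ≥ 0, then a↓ = ∞. -/

import Mathlib

/-- Size expressions of the size algebra A: a ::= α | s a | ∞. -/
inductive SExpr : Type
  | var : ℕ → SExpr
  | s : SExpr → SExpr
  | infty : SExpr
deriving DecidableEq

/-- The quasi-ordering ≤_A on size expressions. -/
inductive SLe : SExpr → SExpr → Prop
  | refl (a) : SLe a a
  | trans {a b c} : SLe a b → SLe b c → SLe a c
  | mon {a b} : SLe a b → SLe (.s a) (.s b)
  | succ {a b} : SLe a b → SLe a (.s b)
  | infty (a) : SLe a .infty

/-- Normal form w.r.t. the rewrite rule s∞ → ∞. -/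
def nf : SExpr → SExpr
  | .var α => .var α
  | .infty => .infty
  | .s a =>
    match nf a with
    | .infty => .infty
    | b => .s b

/-- Action of a size substitution on size expressions. -/
def subst (φ : ℕ → SExpr) : SExpr → SExpr
  | .var α => φ α
  | .s a => .s (subst φ a)
  | .infty => .infty

/-!
Count the `s`'s of a size expression, with `∞` counting as `⊤ : ℕ∞`. This height is monotone for
`≤_A` and `s^{k+1}` raises it by `k + 1`, so `s^{k+1} a ≤_A a` forces the height of `a` to be `⊤`;
an expression of infinite height is some `s^n ∞`, which normalises to `∞`.
-/

namespace SExpr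

def height : SExpr → ℕ∞
  | .var _ => 0
  | .s a => height a + 1
  | .infty => ⊤

lemma height_mono {a b : SExpr} (h : SLe a b) : a.height ≤ b.height := by
  induction h with
  | refl => exact le_rfl
  | trans _ _ ihab ihbc => exact ihab.trans ihbc
  | mon _ ih => exact add_le_add_left ih 1
  | succ _ ih => exact ih.trans le_self_add
  | infty => exact le_top

lemma height_iterate_s (n : ℕ) (a : SExpr) : (s^[n] a).height = a.height + n := by
  induction n with
  | zero => simp
  | succ n ih =>
    rw [Function.iterate_succ_apply', height, ih, Nat.cast_succ, add_assoc]

lemma height_eq_top_of_iterate_s_le {a : SExpr} {n : ℕ} (hn : n ≠ 0) (h : SLe (s^[n] a) a) :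
    a.height = ⊤ := by
  by_contra hne
  have hle : a.height + n ≤ a.height + 0 := by
    simpa [height_iterate_s] using height_mono h
  exact hn (by exact_mod_cast nonpos_iff_eq_zero.mp (ENat.addLECancellable_of_ne_top hne hle))

lemma nf_eq_infty_of_height_eq_top {a : SExpr} (h : a.height = ⊤) : nf a = .infty := by
  induction a with
  | var _ => simp [height] at h
  | infty => rfl
  | s a ih =>
    have ha : a.height = ⊤ := by simpa [height] using h
    simp [nf, ih ha]

end SExpr

/-- If s^{k+1} a ≤_A a then the normal form of a is ∞. -/
theorem nf_eq_infty_of_succ_le (a : SExpr) (k : ℕ)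
    (h : SLe (SExpr.s^[k + 1] a) a) :
    nf a = .infty :=
  SExpr.nf_eq_infty_of_height_eq_top (SExpr.height_eq_top_of_iterate_s_le k.succ_ne_zero h)
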